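/- arXiv:2505.24193 — 4 statements merged into one kernel-verified Lean document; each statement's English description precedes it below -/
import Mathlib

section
/- Fix a horizon T and delays d₁,…,d_T ≥ 0 (natural numbers). Define σ(t) = |{s ≤ t : s + d_s > t}| (the number of missing observations at time t) and σ_max = max_{t∈[T]} σ(t). Then for every subset S ⊆ [T], σ_max ≤ 2|S| + √(8·D_{S̄}), where D_{S̄} = ∑_{s∉S} d_s. In particular σ_max ≤ O(min_{S⊆[T]} (|S| + √(D_{S̄}))). -/
open Finset

/-- A finset of distinct naturals of size `k` has sum at least `0 + 1 + ⋯ + (k-1)`. -/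
lemma sum_range_card_le (A : Finset ℕ) : ∑ i ∈ range A.card, i ≤ ∑ a ∈ A, a := by
  induction A using Finset.strongInduction with
  | _ A ih =>
    rcases A.eq_empty_or_nonempty with rfl | hA
    · simp
    · have hm : A.max' hA ∈ A := A.max'_mem hA
      have hcard : A.card = (A.erase (A.max' hA)).card + 1 := by
        have := Finset.card_pos.2 hA
        rw [Finset.card_erase_of_mem hm]
        omega
      have hsub : A.erase (A.max' hA) ⊂ A := Finset.erase_ssubset hm
      have hind := ih _ hsub
      have hle : (A.erase (A.max' hA)).card ≤ A.max' hA := by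
        have : A ⊆ range (A.max' hA + 1) := fun x hx => by
          simp [Finset.mem_range, Nat.lt_succ_iff, A.le_max' x hx]
        have := Finset.card_le_card this
        simp only [Finset.card_range] at this
        omega
      calc ∑ i ∈ range A.card, i
          = ∑ i ∈ range (A.erase (A.max' hA)).card, i + (A.erase (A.max' hA)).card := by
            rw [hcard, Finset.sum_range_succ]
        _ ≤ ∑ a ∈ A.erase (A.max' hA), a + A.max' hA := Nat.add_le_add hind hle
        _ = ∑ a ∈ A, a := by
            rw [← Finset.sum_erase_add A _ hm]

/-- For any delays `d₁,…,d_T` and any subset `S ⊆ [T]`, the maximal number of missing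
observations satisfies `σ_max ≤ 2|S| + √(8 · D_{S̄})`. -/
theorem sigma_max_le_skip_plus_sqrt_delay (T : ℕ) (hT : 0 < T) (d : ℕ → ℕ)
    (σ : ℕ → ℕ) (hσ : ∀ t, σ t = ((Finset.Icc 1 t).filter (fun s => t < s + d s)).card)
    (σmax : ℕ) (hσmax : σmax = (Finset.Icc 1 T).sup σ)
    (S : Finset ℕ) (hS : S ⊆ Finset.Icc 1 T) :
    (σmax : ℝ) ≤ 2 * S.card + Real.sqrt (8 * ∑ s ∈ (Finset.Icc 1 T) \ S, (d s : ℝ)) := by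
  -- Pick t attaining the max
  have hne : (Finset.Icc 1 T).Nonempty := ⟨1, Finset.mem_Icc.2 ⟨le_refl 1, hT⟩⟩
  obtain ⟨t, htT, ht⟩ := Finset.exists_mem_eq_sup _ hne σ
  rw [← hσmax] at ht
  set M := (Finset.Icc 1 t).filter (fun s => t < s + d s) with hM
  have hMcard : M.card = σmax := by rw [ht, hσ t]
  set A := M \ S with hA
  set k := A.card with hk
  -- σmax ≤ |S| + k
  have h1 : σmax ≤ S.card + k := by
    have : M ⊆ (M ∩ S) ∪ A := by
      intro x hx
      by_cases hxS : x ∈ S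
      · exact Finset.mem_union_left _ (Finset.mem_inter.2 ⟨hx, hxS⟩)
      · exact Finset.mem_union_right _ (Finset.mem_sdiff.2 ⟨hx, hxS⟩)
    calc σmax = M.card := hMcard.symm
      _ ≤ ((M ∩ S) ∪ A).card := Finset.card_le_card this
      _ ≤ (M ∩ S).card + A.card := Finset.card_union_le _ _
      _ ≤ S.card + k := by
          exact Nat.add_le_add_right (Finset.card_le_card (Finset.inter_subset_right)) _
  -- key: k*(k+1)/2 ≤ ∑ d over A via the map s ↦ t+1-s
  have hmem : ∀ s ∈ A, 1 ≤ s ∧ s ≤ t ∧ t < s + d s := by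
    intro s hs
    have := (Finset.mem_sdiff.1 hs).1
    rw [hM, Finset.mem_filter, Finset.mem_Icc] at this
    exact ⟨this.1.1, this.1.2, this.2⟩
  set B := A.image (fun s => t + 1 - s) with hB
  have hinj : Set.InjOn (fun s => t + 1 - s) A := by
    intro a ha b hb hab
    have ha' := hmem a ha; have hb' := hmem b hb
    simp only at hab
    omega
  have hBcard : B.card = k := by rw [hB, Finset.card_image_of_injOn hinj]
  have hsumB : ∑ b ∈ B, b ≤ ∑ s ∈ A, d s := by
    rw [hB, Finset.sum_image (fun a ha b hb => hinj ha hb)]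
    exact Finset.sum_le_sum fun s hs => by have := hmem s hs; omega
  have hB1 : ∀ b ∈ B, 1 ≤ b := by
    intro b hb
    rw [hB, Finset.mem_image] at hb
    obtain ⟨s, hs, rfl⟩ := hb
    have := hmem s hs; omega
  -- sum of B ≥ k + (k*(k-1)/2) ≥ k^2/2, i.e. 2 * sum ≥ k^2 + k
  have hkey : k * k ≤ 2 * ∑ b ∈ B, b := by
    set B' := B.image (fun b => b - 1) with hB'
    have hinj' : Set.InjOn (fun b => b - 1) B := by
      intro a ha b hb hab
      have := hB1 a ha; have := hB1 b hb
      simp only at hab; omega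
    have hB'card : B'.card = k := by rw [hB', Finset.card_image_of_injOn hinj', hBcard]
    have h2 : ∑ i ∈ range k, i ≤ ∑ b ∈ B', b := by
      rw [← hB'card]; exact sum_range_card_le B'
    have h3 : ∑ b ∈ B', b + k ≤ ∑ b ∈ B, b := by
      rw [hB', Finset.sum_image (fun a ha b hb => hinj' ha hb), ← hBcard,
        Finset.card_eq_sum_ones, ← Finset.sum_add_distrib]
      exact Finset.sum_le_sum fun b hb => by have := hB1 b hb; omega
    have h4 : (∑ i ∈ range k, i) * 2 = k * (k - 1) := Finset.sum_range_id_mul_two k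
    rcases Nat.eq_zero_or_pos k with hk0 | hk0
    · simp [hk0]
    · have hk1 : k * (k - 1) + k = k * k := by
        cases k with
        | zero => simp
        | succ n => simp only [Nat.succ_sub_one]; ring
      linarith [h2, h3, h4, hk1]
  -- transfer to D
  have hAD : A ⊆ (Finset.Icc 1 T) \ S := by
    intro s hs
    rcases Finset.mem_sdiff.1 hs with ⟨hsM, hsS⟩
    refine Finset.mem_sdiff.2 ⟨?_, hsS⟩
    have := hmem s hs
    have htT' := (Finset.mem_Icc.1 htT).2
    exact Finset.mem_Icc.2 ⟨this.1, le_trans this.2.1 htT'⟩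
  have hsumD : (∑ s ∈ A, (d s : ℕ)) ≤ ∑ s ∈ (Finset.Icc 1 T) \ S, d s :=
    Finset.sum_le_sum_of_subset hAD
  have hkk : (k : ℝ) * k ≤ 2 * ∑ s ∈ (Finset.Icc 1 T) \ S, (d s : ℝ) := by
    have : k * k ≤ 2 * ∑ s ∈ (Finset.Icc 1 T) \ S, d s := by
      calc k * k ≤ 2 * ∑ b ∈ B, b := hkey
        _ ≤ 2 * ∑ s ∈ A, d s := by omega
        _ ≤ _ := by omega
    calc (k : ℝ) * k = ((k * k : ℕ) : ℝ) := by push_cast; ring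
      _ ≤ ((2 * ∑ s ∈ (Finset.Icc 1 T) \ S, d s : ℕ) : ℝ) := by exact_mod_cast this
      _ = 2 * ∑ s ∈ (Finset.Icc 1 T) \ S, (d s : ℝ) := by push_cast; ring
  set D : ℝ := ∑ s ∈ (Finset.Icc 1 T) \ S, (d s : ℝ) with hD
  have hD0 : 0 ≤ D := Finset.sum_nonneg fun s _ => Nat.cast_nonneg _
  have hksqrt : (k : ℝ) ≤ Real.sqrt (8 * D) := by
    rw [Real.le_sqrt (Nat.cast_nonneg k) (by linarith)]
    nlinarith [hkk]
  have h1' : (σmax : ℝ) ≤ S.card + k := by exact_mod_cast h1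
  have hS0 : (0:ℝ) ≤ S.card := Nat.cast_nonneg _
  linarith
end

section
/- Let ℓ₁, …, ℓ_n ∈ [0,1] be deterministic losses and X₁,…,X_n independent Bernoulli random variables with parameters p_t ≥ p_min > 0. If n ≥ log(1/δ)/p_min, then with probability at least 1 - δ: max_{k ≤ n} ∑_{t=1}^{k} (X_t ℓ_t / p_t - ℓ_t) ≤ 2·√(n·log(1/δ)/p_min). -/
/-!
Put `Y_t = X_t ℓ_t / p_t - ℓ_t`, `L = log (1/δ)` and `λ = √(L pmin / n)`, so that `λ ≤ pmin`.
The factors `exp (λ Y_t) / 𝔼 exp (λ Y_t)` are independent with mean one, hence their running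
products form a nonnegative martingale and Doob's maximal inequality bounds the probability that
one of them reaches a level `ε` by `1/ε`. Since `|λ Y_t| ≤ 1`, the bound `eˣ ≤ 1 + x + x²` gives
`𝔼 exp (λ Y_t) ≤ exp (λ² Var Y_t) ≤ exp (λ² / pmin)`, so a partial sum exceeding
`u = 2 √(n L / pmin)` forces a running product above `exp (λ u - n λ² / pmin) = exp L = 1/δ`.
-/

open MeasureTheory ProbabilityTheory Finset Real

lemma Real.exp_le_one_add_add_sq {x : ℝ} (hx : |x| ≤ 1) : exp x ≤ 1 + x + x ^ 2 := by
  linarith [(abs_le.mp (abs_exp_sub_one_sub_id_le hx)).2]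

lemma Real.mul_exp_add_mul_exp_le {q a b : ℝ} (hq0 : 0 ≤ q) (hq1 : q ≤ 1)
    (hmean : q * a + (1 - q) * b = 0) (ha : |a| ≤ 1) (hb : |b| ≤ 1) :
    q * exp a + (1 - q) * exp b ≤ exp (q * a ^ 2 + (1 - q) * b ^ 2) := by
  have hqa := mul_le_mul_of_nonneg_left (exp_le_one_add_add_sq ha) hq0
  have hqb := mul_le_mul_of_nonneg_left (exp_le_one_add_add_sq hb) (sub_nonneg.mpr hq1)
  linarith [add_one_le_exp (q * a ^ 2 + (1 - q) * b ^ 2)]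

lemma Real.mul_exp_importance_weight_le {q ℓ lam : ℝ} (hq : 0 < q) (hq1 : q ≤ 1)
    (hℓ : ℓ ∈ Set.Icc (0 : ℝ) 1) (hlam : 0 ≤ lam) (hlamq : lam ≤ q) :
    q * exp (lam * (ℓ / q - ℓ)) + (1 - q) * exp (lam * -ℓ) ≤ exp (lam ^ 2 / q) := by
  obtain ⟨hℓ0, hℓ1⟩ := hℓ
  have hℓq : 0 ≤ ℓ * (1 - q) ∧ ℓ * (1 - q) ≤ 1 :=
    ⟨by nlinarith, by nlinarith⟩
  have hvar : q * (lam * (ℓ / q - ℓ)) ^ 2 + (1 - q) * (lam * -ℓ) ^ 2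
      = lam ^ 2 / q * (ℓ * (ℓ * (1 - q))) := by
    field_simp; ring
  refine (mul_exp_add_mul_exp_le hq.le hq1 ?_ ?_ ?_).trans (exp_le_exp.mpr ?_)
  · field_simp; ring
  · have hweight : lam * (ℓ / q - ℓ) = lam / q * (ℓ * (1 - q)) := by field_simp
    rw [hweight, abs_of_nonneg (by positivity)]
    exact mul_le_one₀ ((div_le_one hq).mpr hlamq) hℓq.1 hℓq.2
  · rw [abs_le]; constructor <;> nlinarith
  · rw [hvar]
    exact mul_le_of_le_one_right (by positivity) (mul_le_one₀ hℓ1 hℓq.1 hℓq.2)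

lemma Real.exists_chernoff_parameter {L q n : ℝ} (hL : 0 < L) (hq : 0 < q) (hLn : L ≤ n * q) :
    ∃ lam, 0 ≤ lam ∧ lam ≤ q ∧ n * (lam ^ 2 / q) - lam * (2 * √(n * L / q)) = -L := by
  have hn : 0 < n := pos_of_mul_pos_left (hL.trans_le hLn) hq.le
  refine ⟨√(L * q / n), sqrt_nonneg _, ?_, ?_⟩
  · rw [sqrt_le_left hq.le, div_le_iff₀ hn]
    nlinarith
  · have hlam_u : √(L * q / n) * √(n * L / q) = L := by
      rw [← sqrt_mul (by positivity), show L * q / n * (n * L / q) = L ^ 2 by field_simp,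
        sqrt_sq hL.le]
    rw [sq_sqrt (by positivity), mul_left_comm, hlam_u]
    field_simp
    ring

section ZeroOne

variable {Ω : Type*} {X : Ω → ℝ}

lemma comp_eq_of_forall_eq_zero_or_one (h01 : ∀ ω, X ω = 0 ∨ X ω = 1) (g : ℝ → ℝ) :
    (fun ω => g (X ω)) = fun ω => g 0 + (g 1 - g 0) * X ω := by
  funext ω
  rcases h01 ω with h | h <;> simp [h]

lemma eq_indicator_of_forall_eq_zero_or_one (h01 : ∀ ω, X ω = 0 ∨ X ω = 1) :
    X = {ω | X ω = 1}.indicator 1 := by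
  funext ω
  rcases h01 ω with h | h <;> simp [h]

variable [MeasurableSpace Ω] {μ : Measure Ω}

lemma integrable_of_forall_eq_zero_or_one [IsFiniteMeasure μ] (hX : Measurable X)
    (h01 : ∀ ω, X ω = 0 ∨ X ω = 1) : Integrable X μ := by
  rw [eq_indicator_of_forall_eq_zero_or_one h01]
  exact (integrable_const 1).indicator (hX (measurableSet_singleton 1))

lemma integrable_comp_of_forall_eq_zero_or_one [IsFiniteMeasure μ] (hX : Measurable X)
    (h01 : ∀ ω, X ω = 0 ∨ X ω = 1) (g : ℝ → ℝ) : Integrable (fun ω => g (X ω)) μ := by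
  rw [comp_eq_of_forall_eq_zero_or_one h01]
  exact (integrable_const _).add ((integrable_of_forall_eq_zero_or_one hX h01).const_mul _)

lemma integral_comp_of_forall_eq_zero_or_one [IsProbabilityMeasure μ] (hX : Measurable X)
    (h01 : ∀ ω, X ω = 0 ∨ X ω = 1) (g : ℝ → ℝ) :
    ∫ ω, g (X ω) ∂μ = μ.real {ω | X ω = 1} * g 1 + (1 - μ.real {ω | X ω = 1}) * g 0 := by
  have hXmean : ∫ ω, X ω ∂μ = μ.real {ω | X ω = 1} := by
    conv_lhs => rw [eq_indicator_of_forall_eq_zero_or_one h01]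
    exact integral_indicator_one (hX (measurableSet_singleton 1))
  rw [comp_eq_of_forall_eq_zero_or_one h01, integral_add (integrable_const _)
    ((integrable_of_forall_eq_zero_or_one hX h01).const_mul _), integral_const_mul, hXmean]
  simp only [integral_const, probReal_univ, smul_eq_mul, one_mul]
  ring

lemma mgf_importance_weighted_le [IsProbabilityMeasure μ] (hX : Measurable X)
    (h01 : ∀ ω, X ω = 0 ∨ X ω = 1) {q ℓ lam : ℝ} (hq : 0 < q) (hq1 : q ≤ 1)
    (hXq : μ {ω | X ω = 1} = ENNReal.ofReal q) (hℓ : ℓ ∈ Set.Icc (0 : ℝ) 1) (hlam : 0 ≤ lam)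
    (hlamq : lam ≤ q) :
    mgf (fun ω => X ω * ℓ / q - ℓ) μ lam ≤ exp (lam ^ 2 / q) := by
  have hXreal : μ.real {ω | X ω = 1} = q := by
    rw [measureReal_def, hXq, ENNReal.toReal_ofReal hq.le]
  have h := integral_comp_of_forall_eq_zero_or_one (μ := μ) hX h01
    fun x => exp (lam * (x * ℓ / q - ℓ))
  simp only [hXreal, one_mul, zero_mul, zero_div, zero_sub] at h
  rw [mgf, h]
  exact mul_exp_importance_weight_le hq hq1 hℓ hlam hlamq

end ZeroOne

namespace MeasureTheory.Filtration

variable {Ω ι β : Type*} {m : MeasurableSpace Ω} [Preorder ι] [mβ : MeasurableSpace β]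

/-- Unlike `Filtration.natural`, the strict inequality keeps `u i` independent of the `i`-th
σ-algebra when the `u j` are independent. -/
def naturalLT (u : ι → Ω → β) (hu : ∀ i, Measurable (u i)) : Filtration ι m where
  seq i := ⨆ j < i, MeasurableSpace.comap (u j) mβ
  mono' _ _ hij := biSup_mono fun _ hj => lt_of_lt_of_le hj hij
  le' _ := iSup₂_le fun j _ => (hu j).comap_le

lemma measurable_naturalLT {u : ι → Ω → β} (hu : ∀ i, Measurable (u i)) {i j : ι} (hij : j < i) :
    Measurable[naturalLT u hu i] (u j) :=
  (comap_measurable (u j)).mono (le_iSup₂ (f := fun j (_ : j < i) => mβ.comap (u j)) j hij) le_rfl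

end MeasureTheory.Filtration

namespace ProbabilityTheory

open Filtration

variable {Ω : Type*} [MeasurableSpace Ω] {μ : Measure Ω}

lemma iIndepFun.indep_comap_naturalLT {ι β : Type*} [Preorder ι]
    [mβ : MeasurableSpace β] {u : ι → Ω → β} (hu : ∀ i, Measurable (u i))
    (hindep : iIndepFun u μ) (i : ι) :
    Indep (mβ.comap (u i)) (naturalLT u hu i) μ := by
  have := indep_iSup_of_disjoint (fun j => (hu j).comap_le) hindep
    (S := {i}) (T := Set.Iio i) (by simp)
  rwa [_root_.iSup_singleton] at this

theorem iIndepFun.martingale_prod_range [IsProbabilityMeasure μ]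
    {Z : ℕ → Ω → ℝ} (hZ : ∀ t, Measurable (Z t)) (hindep : iIndepFun Z μ)
    (hint : ∀ t, Integrable (Z t) μ) (hmean : ∀ t, μ[Z t] = 1) :
    Martingale (fun k ω => ∏ t ∈ range k, Z t ω) (naturalLT Z hZ) μ := by
  set M : ℕ → Ω → ℝ := fun k ω => ∏ t ∈ range k, Z t ω
  have hM : ∀ k, Measurable[naturalLT Z hZ k] (M k) := fun k =>
    Finset.measurable_prod _ fun t ht => measurable_naturalLT hZ (mem_range.mp ht)
  have hsucc : ∀ k, M (k + 1) = M k * Z k := fun k => funext fun ω => prod_range_succ _ _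
  have hMZ : ∀ k, IndepFun (M k) (Z k) μ := fun k => by
    rw [IndepFun_iff_Indep]
    exact indep_of_indep_of_le_left (hindep.indep_comap_naturalLT hZ k).symm (hM k).comap_le
  have hMint : ∀ k, Integrable (M k) μ := by
    intro k
    induction k with
    | zero => simp [M]
    | succ k ih => rw [hsucc]; exact (hMZ k).integrable_mul ih (hint k)
  refine martingale_nat (fun k => (hM k).stronglyMeasurable) hMint fun k => ?_
  have hcond : μ[Z k | naturalLT Z hZ k] =ᵐ[μ] fun _ => 1 := by
    rw [← hmean k]
    exact condExp_indep_eq (hZ k).comap_le ((naturalLT Z hZ).le k)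
      (comap_measurable (Z k)).stronglyMeasurable (hindep.indep_comap_naturalLT hZ k)
  rw [hsucc]
  filter_upwards [condExp_mul_of_stronglyMeasurable_left (hM k).stronglyMeasurable
    (hsucc k ▸ hMint (k + 1)) (hint k), hcond] with ω h1 h2
  simp [h1, h2]

theorem iIndepFun.measure_exists_le_prod_range_le [IsProbabilityMeasure μ]
    {Z : ℕ → Ω → ℝ} (hZ : ∀ t, Measurable (Z t)) (hindep : iIndepFun Z μ)
    (hnonneg : ∀ t ω, 0 ≤ Z t ω) (hint : ∀ t, Integrable (Z t) μ) (hmean : ∀ t, μ[Z t] = 1)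
    {ε : ℝ} (hε : 0 < ε) (n : ℕ) :
    μ {ω | ∃ k ≤ n, ε ≤ ∏ t ∈ range k, Z t ω} ≤ ENNReal.ofReal ε⁻¹ := by
  have hmart := hindep.martingale_prod_range hZ hint hmean
  have hdoob := maximal_ineq hmart.submartingale
    (fun k ω => prod_nonneg fun t _ => hnonneg t ω) (ε := ε.toNNReal) n
  have hset : {ω | (ε.toNNReal : ℝ) ≤ (range (n + 1)).sup' nonempty_range_add_one
      fun k => ∏ t ∈ range k, Z t ω} = {ω | ∃ k ≤ n, ε ≤ ∏ t ∈ range k, Z t ω} := by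
    ext ω
    simp [Real.coe_toNNReal _ hε.le, le_sup'_iff]
  have hmean_n : ∫ ω, ∏ t ∈ range n, Z t ω ∂μ = 1 := calc
    _ = ∫ ω, μ[fun ω => ∏ t ∈ range n, Z t ω | naturalLT Z hZ 0] ω ∂μ :=
      (integral_condExp ((naturalLT Z hZ).le 0)).symm
    _ = ∫ ω, ∏ t ∈ range 0, Z t ω ∂μ := integral_congr_ae (hmart.condExp_ae_eq n.zero_le)
    _ = 1 := by simp
  have hsetIntegral_le := setIntegral_le_integral (s := {ω | ∃ k ≤ n, ε ≤ ∏ t ∈ range k, Z t ω})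
    (hmart.integrable n) (.of_forall fun ω => prod_nonneg fun t _ => hnonneg t ω)
  rw [hset] at hdoob
  rw [hmean_n] at hsetIntegral_le
  rw [ENNReal.ofReal_inv_of_pos hε, ENNReal.le_inv_iff_mul_le, mul_comm]
  exact hdoob.trans (ENNReal.ofReal_le_one.mpr hsetIntegral_le)

theorem iIndepFun.measure_exists_sum_range_gt_le [IsProbabilityMeasure μ]
    {Y : ℕ → Ω → ℝ} (hY : ∀ t, Measurable (Y t)) (hindep : iIndepFun Y μ) {lam : ℝ}
    (hlam : 0 ≤ lam) (hint : ∀ t, Integrable (fun ω => exp (lam * Y t ω)) μ) {n : ℕ} {c : ℝ}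
    (hc : 0 ≤ c) (hmgf : ∀ t < n, mgf (Y t) μ lam ≤ exp c) (u : ℝ) :
    μ {ω | ∃ k ≤ n, u < ∑ t ∈ range k, Y t ω} ≤ ENNReal.ofReal (exp (n * c - lam * u)) := by
  set Z : ℕ → Ω → ℝ := fun t ω => exp (lam * Y t ω) / mgf (Y t) μ lam
  have hmgf_pos : ∀ t, 0 < mgf (Y t) μ lam := fun t => mgf_pos (hint t)
  have hZ : ∀ t, Measurable (Z t) := fun t => by fun_prop
  have hZindep : iIndepFun Z μ :=
    hindep.comp (fun t x => exp (lam * x) / mgf (Y t) μ lam) fun t => by fun_prop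
  have hZmean : ∀ t, μ[Z t] = 1 := fun t => by
    rw [integral_div, ← mgf, div_self (hmgf_pos t).ne']
  have hprod_mgf : ∀ k ≤ n, ∏ t ∈ range k, mgf (Y t) μ lam ≤ exp (n * c) := fun k hk => calc
    _ ≤ ∏ t ∈ range k, exp c :=
      prod_le_prod (fun t _ => (hmgf_pos t).le) fun t ht => hmgf t ((mem_range.mp ht).trans_le hk)
    _ = exp (k * c) := by rw [prod_const, card_range, ← exp_nat_mul]
    _ ≤ exp (n * c) := by gcongr
  have hsubset : {ω | ∃ k ≤ n, u < ∑ t ∈ range k, Y t ω} ⊆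
      {ω | ∃ k ≤ n, exp (lam * u - n * c) ≤ ∏ t ∈ range k, Z t ω} := by
    rintro ω ⟨k, hk, hu⟩
    refine ⟨k, hk, ?_⟩
    rw [prod_div_distrib, ← exp_sum, ← mul_sum, exp_sub]
    gcongr
    · exact prod_pos fun t _ => hmgf_pos t
    · exact hprod_mgf k hk
  calc _ ≤ _ := measure_mono hsubset
    _ ≤ _ := hZindep.measure_exists_le_prod_range_le hZ
        (fun t ω => div_nonneg (exp_pos _).le (hmgf_pos t).le) (fun t => (hint t).div_const _)
        hZmean (exp_pos _) n
    _ = _ := by rw [← exp_neg, neg_sub]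

lemma ofReal_one_sub_le_measure_of_compl_le [IsProbabilityMeasure μ] {s : Set Ω} {δ : ℝ}
    (hδ : 0 ≤ δ) (hs : μ sᶜ ≤ ENNReal.ofReal δ) :
    ENNReal.ofReal (1 - δ) ≤ μ s := by
  have hunion : 1 ≤ μ s + μ sᶜ := by
    simpa [Set.union_compl_self] using measure_union_le (μ := μ) s sᶜ
  rw [ENNReal.ofReal_sub _ hδ, ENNReal.ofReal_one, tsub_le_iff_right]
  exact hunion.trans (by gcongr)

end ProbabilityTheory

/-- Freedman-type bound for the importance-sampling estimator: if `X_t` are independent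
Bernoulli(`p t`) with `p t ≥ pmin > 0`, `ℓ_t ∈ [0,1]` deterministic, and
`n ≥ log(1/δ)/pmin`, then with probability at least `1 - δ`,
`max_{k ≤ n} ∑_{t<k} (X_t ℓ_t / p_t - ℓ_t) ≤ 2√(n log(1/δ)/pmin)`. -/
theorem importance_sampling_concentration
    {Ω : Type*} [MeasurableSpace Ω] (P : Measure Ω) [IsProbabilityMeasure P]
    (n : ℕ) (ℓ : ℕ → ℝ) (hℓ : ∀ t < n, ℓ t ∈ Set.Icc (0 : ℝ) 1)
    (p : ℕ → ℝ) (pmin : ℝ) (hpmin : 0 < pmin) (hp : ∀ t < n, pmin ≤ p t ∧ p t ≤ 1)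
    (X : ℕ → Ω → ℝ) (hmeas : ∀ t, Measurable (X t))
    (h01 : ∀ t ω, X t ω = 0 ∨ X t ω = 1)
    (hBern : ∀ t, P {ω | X t ω = 1} = ENNReal.ofReal (p t))
    (hindep : iIndepFun X P)
    (δ : ℝ) (hδ : δ ∈ Set.Ioo (0 : ℝ) 1)
    (hn : Real.log (1 / δ) / pmin ≤ (n : ℝ)) :
    P {ω | ∀ k ≤ n, ∑ t ∈ Finset.range k, (X t ω * ℓ t / p t - ℓ t)
        ≤ 2 * Real.sqrt ((n : ℝ) * Real.log (1 / δ) / pmin)}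
      ≥ ENNReal.ofReal (1 - δ) := by
  obtain ⟨hδ0, hδ1⟩ := hδ
  set L := Real.log (1 / δ)
  obtain ⟨lam, hlam0, hlam_le, hexponent⟩ :=
    exists_chernoff_parameter (log_pos (one_lt_one_div hδ0 hδ1)) hpmin ((div_le_iff₀ hpmin).mp hn)
  have hmgf : ∀ t < n, mgf (fun ω => X t ω * ℓ t / p t - ℓ t) P lam ≤ exp (lam ^ 2 / pmin) := by
    intro t ht
    obtain ⟨hpmin_le, hp_le⟩ := hp t ht
    refine (mgf_importance_weighted_le (hmeas t) (h01 t) (hpmin.trans_le hpmin_le) hp_le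
      (hBern t) (hℓ t ht) hlam0 (hlam_le.trans hpmin_le)).trans ?_
    gcongr
  have hbad := (hindep.comp (fun t x => x * ℓ t / p t - ℓ t) fun t => by fun_prop)
    |>.measure_exists_sum_range_gt_le (fun t => by fun_prop) hlam0
      (fun t => integrable_comp_of_forall_eq_zero_or_one (hmeas t) (h01 t)
        fun x => exp (lam * (x * ℓ t / p t - ℓ t))) (by positivity) hmgf (2 * √(n * L / pmin))
  rw [hexponent, exp_neg, exp_log (by positivity), one_div, inv_inv] at hbad
  refine ofReal_one_sub_le_measure_of_compl_le hδ0.le (le_of_eq_of_le ?_ hbad)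
  simp only [Set.compl_ofPred, not_forall, not_le, exists_prop, Function.comp_apply]
end

section
/- Let {X_t} be a sequence of Bernoulli random variables adapted to a filtration, with P(X_t = 1 | F_t) = P_t where P_t is F_t-measurable. Then with probability at least 1 - δ, simultaneously for all t ≤ T: ∑_{k=1}^t X_k ≥ (1/2)·∑_{k=1}^t P_k - log(1/δ). -/
/-!
Put `c = 1 - e⁻¹ ≥ 1/2`. A `{0,1}`-valued `X` satisfies `e^{-X} = 1 - c X`, so
`E[e^{-X_t} | F_t] = 1 - c P_t ≤ e^{-P_t/2}`. Hence `M_t = exp (½ ∑_{k<t} P_k - ∑_{k<t} X_k)` is a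
nonnegative supermartingale with `M_0 = 1`, and Ville's maximal inequality bounds the probability
that `M_t ≥ 1/δ` for some `t ≤ T` by `δ`. Off that event the claimed inequality holds.
-/

open MeasureTheory ProbabilityTheory Filter Finset Real

theorem Real.exp_neg_of_eq_zero_or_eq_one {x : ℝ} (hx : x = 0 ∨ x = 1) :
    exp (-x) = 1 - (1 - exp (-1)) * x := by
  rcases hx with rfl | rfl <;> simp

theorem Real.one_sub_mul_le_exp_neg_half_mul {p : ℝ} (hp : 0 ≤ p) :
    1 - (1 - exp (-1)) * p ≤ exp (-(1 / 2 * p)) := by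
  nlinarith [exp_neg_one_lt_half, add_one_le_exp (-(1 / 2 * p))]

theorem Set.mem_Icc_zero_one_of_eq_zero_or_eq_one {α : Type*} [Zero α] [One α] [Preorder α]
    [ZeroLEOneClass α] {x : α} (hx : x = 0 ∨ x = 1) : x ∈ Set.Icc (0 : α) 1 := by
  rcases hx with rfl | rfl <;> simp

namespace MeasureTheory

variable {Ω : Type*} {m0 : MeasurableSpace Ω} {μ : Measure Ω} [IsFiniteMeasure μ]
  {𝒢 : Filtration ℕ m0}

section Ville

variable {f : ℕ → Ω → ℝ}

theorem Supermartingale.integral_stoppedValue_le (hf : Supermartingale f 𝒢 μ) {τ : Ω → ℕ∞}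
    (hτ : IsStoppingTime 𝒢 τ) {N : ℕ} (hτN : ∀ ω, τ ω ≤ N) :
    μ[stoppedValue f τ] ≤ μ[f 0] := by
  have h := hf.neg.expected_stoppedValue_mono (isStoppingTime_const 𝒢 0) hτ
    (fun _ => zero_le) hτN
  rw [stoppedValue_const] at h
  simp only [stoppedValue, Pi.neg_apply, integral_neg] at h ⊢
  linarith

/-- **Ville's maximal inequality** over a finite horizon. -/
theorem Supermartingale.maximal_ineq (hf : Supermartingale f 𝒢 μ) (hnonneg : 0 ≤ f) {ε : ℝ}
    (hε : 0 ≤ ε) (n : ℕ) :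
    ENNReal.ofReal ε * μ {ω | ∃ k ≤ n, ε ≤ f k ω} ≤ ENNReal.ofReal (μ[f 0]) := by
  set A := {ω | ∃ k ≤ n, ε ≤ f k ω}
  set τ : Ω → ℕ∞ := fun ω => (hittingBtwn f (Set.Ici ε) 0 n ω : ℕ)
  have hτ : IsStoppingTime 𝒢 τ :=
    hf.stronglyAdapted.adapted.isStoppingTime_hittingBtwn measurableSet_Ici
  have hτn : ∀ ω, τ ω ≤ n := fun ω => WithTop.coe_le_coe.mpr (hittingBtwn_le ω)
  have hint : Integrable (stoppedValue f τ) μ := integrable_stoppedValue ℕ hτ hf.integrable hτn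
  have hA : MeasurableSet A := by
    have hfm k := (hf.stronglyMeasurable k).measurable.mono (𝒢.le k) le_rfl
    simp only [A, Set.ofPred_exists]
    measurability
  have hε_le : ∀ ω ∈ A, ε ≤ stoppedValue f τ ω := fun ω ⟨k, hk, hεk⟩ =>
    stoppedValue_hittingBtwn_mem ⟨k, ⟨zero_le, hk⟩, hεk⟩
  rw [← ENNReal.ofReal_toReal (measure_ne_top μ A), ← ENNReal.ofReal_mul hε]
  refine ENNReal.ofReal_le_ofReal ?_
  calc ε * μ.real A ≤ ∫ ω in A, stoppedValue f τ ω ∂μ :=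
        setIntegral_ge_of_const_le_real hA (measure_ne_top μ A) hε_le hint.integrableOn
    _ ≤ μ[stoppedValue f τ] :=
        setIntegral_le_integral hint (Eventually.of_forall fun ω => hnonneg _ _)
    _ ≤ μ[f 0] := hf.integral_stoppedValue_le hτ hτn

end Ville

theorem ae_condExp_mem_Icc {m : MeasurableSpace Ω} (hm : m ≤ m0) {g : Ω → ℝ}
    (hg : Integrable g μ) {a b : ℝ} (hgab : ∀ᵐ ω ∂μ, g ω ∈ Set.Icc a b) :
    ∀ᵐ ω ∂μ, μ[g|m] ω ∈ Set.Icc a b := by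
  have ha := condExp_mono (m := m) (integrable_const a) hg (hgab.mono fun _ h => h.1)
  have hb := condExp_mono (m := m) hg (integrable_const b) (hgab.mono fun _ h => h.2)
  rw [condExp_const hm] at ha hb
  filter_upwards [ha, hb] with ω using And.intro

theorem condExp_exp_neg_le_of_eq_zero_or_eq_one {m : MeasurableSpace Ω} (hm : m ≤ m0)
    {X p : Ω → ℝ} (hX : Integrable X μ) (h01 : ∀ ω, X ω = 0 ∨ X ω = 1)
    (hp : μ[X|m] =ᵐ[μ] p) :
    μ[fun ω => exp (-X ω)|m] ≤ᵐ[μ] fun ω => exp (-(1 / 2 * p ω)) := by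
  have hlin : (fun ω => exp (-X ω)) = (fun _ => (1 : ℝ)) - (1 - exp (-1)) • X :=
    funext fun ω => exp_neg_of_eq_zero_or_eq_one (h01 ω)
  have hp0 : ∀ᵐ ω ∂μ, 0 ≤ p ω := by
    filter_upwards [hp, ae_condExp_mem_Icc hm hX (Eventually.of_forall fun ω =>
      Set.mem_Icc_zero_one_of_eq_zero_or_eq_one (h01 ω))] with ω h h0
    exact h ▸ h0.1
  rw [hlin]
  filter_upwards [condExp_sub (integrable_const 1) (hX.smul (1 - exp (-1))) m,
    condExp_smul (1 - exp (-1)) X m, hp, hp0] with ω hsub hsmul hpω hp0ω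
  rw [hsub, condExp_const hm, Pi.sub_apply, hsmul, Pi.smul_apply, hpω, smul_eq_mul]
  exact one_sub_mul_le_exp_neg_half_mul hp0ω

section ExpLowerDeviation

variable {X p : ℕ → Ω → ℝ}

noncomputable def expLowerDeviation (X p : ℕ → Ω → ℝ) (t : ℕ) (ω : Ω) : ℝ :=
  exp (1 / 2 * ∑ k ∈ range t, p k ω - ∑ k ∈ range t, X k ω)

theorem expLowerDeviation_pos (t : ℕ) (ω : Ω) : 0 < expLowerDeviation X p t ω := exp_pos _

theorem expLowerDeviation_zero : expLowerDeviation X p 0 = 1 := by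
  ext ω
  simp [expLowerDeviation]

theorem expLowerDeviation_succ (t : ℕ) (ω : Ω) :
    expLowerDeviation X p (t + 1) ω =
      expLowerDeviation X p t ω * exp (1 / 2 * p t ω) * exp (-X t ω) := by
  simp only [expLowerDeviation, ← exp_add, sum_range_succ]
  ring_nf

theorem expLowerDeviation_le_exp {t : ℕ} {ω : Ω} (hX : ∀ k, 0 ≤ X k ω) (hp : ∀ k, p k ω ≤ 1) :
    expLowerDeviation X p t ω ≤ exp (1 / 2 * t) := by
  refine exp_le_exp.2 ?_
  have hpt : ∑ k ∈ range t, p k ω ≤ t := by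
    simpa using sum_le_sum fun k (_ : k ∈ range t) => hp k
  have hXt : 0 ≤ ∑ k ∈ range t, X k ω := sum_nonneg fun k _ => hX k
  linarith

theorem stronglyAdapted_expLowerDeviation (hX : ∀ t, StronglyMeasurable[𝒢 (t + 1)] (X t))
    (hp : ∀ t, StronglyMeasurable[𝒢 t] (p t)) : StronglyAdapted 𝒢 (expLowerDeviation X p) := by
  intro t
  have hpt : Measurable[𝒢 t] fun ω => ∑ k ∈ range t, p k ω :=
    Finset.measurable_sum _ fun k hk => ((hp k).mono (𝒢.mono (mem_range.1 hk).le)).measurable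
  have hXt : Measurable[𝒢 t] fun ω => ∑ k ∈ range t, X k ω :=
    Finset.measurable_sum _ fun k hk => ((hX k).mono (𝒢.mono (mem_range.1 hk))).measurable
  exact ((hpt.const_mul _).sub hXt).exp.stronglyMeasurable

theorem supermartingale_expLowerDeviation (h01 : ∀ t ω, X t ω = 0 ∨ X t ω = 1)
    (hX : ∀ t, StronglyMeasurable[𝒢 (t + 1)] (X t)) (hp : ∀ t, StronglyMeasurable[𝒢 t] (p t))
    (hcond : ∀ t, μ[X t|𝒢 t] =ᵐ[μ] p t) : Supermartingale (expLowerDeviation X p) 𝒢 μ := by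
  set M := expLowerDeviation X p
  have hadapted : StronglyAdapted 𝒢 M := stronglyAdapted_expLowerDeviation hX hp
  have hXint t : Integrable (X t) μ :=
    .of_bound ((hX t).mono (𝒢.le _)).aestronglyMeasurable 1 (Eventually.of_forall fun ω => by
      rcases h01 t ω with h | h <;> simp [h])
  have hp1 : ∀ᵐ ω ∂μ, ∀ k, p k ω ≤ 1 := ae_all_iff.2 fun k => by
    filter_upwards [hcond k, ae_condExp_mem_Icc (𝒢.le k) (hXint k) (Eventually.of_forall
      fun ω => Set.mem_Icc_zero_one_of_eq_zero_or_eq_one (h01 k ω))] with ω h h01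
    exact h ▸ h01.2
  have hMint t : Integrable (M t) μ :=
    .of_bound ((hadapted t).mono (𝒢.le t)).aestronglyMeasurable (exp (1 / 2 * t)) (by
      filter_upwards [hp1] with ω hω
      rw [norm_of_nonneg (expLowerDeviation_pos t ω).le]
      exact expLowerDeviation_le_exp (fun k => (Set.mem_Icc_zero_one_of_eq_zero_or_eq_one
        (h01 k ω)).1) hω)
  refine supermartingale_nat hadapted hMint fun t => ?_
  set g : Ω → ℝ := fun ω => M t ω * exp (1 / 2 * p t ω)
  have hg : StronglyMeasurable[𝒢 t] g :=
    (hadapted t).mul (((hp t).measurable.const_mul _).exp.stronglyMeasurable)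
  have hM_succ : M (t + 1) = g * fun ω => exp (-X t ω) :=
    funext (expLowerDeviation_succ t)
  have hexp_int : Integrable (fun ω => exp (-X t ω)) μ :=
    .of_bound ((hX t).mono (𝒢.le _)).measurable.neg.exp.aestronglyMeasurable 1
      (Eventually.of_forall fun ω => by rcases h01 t ω with h | h <;> simp [h])
  filter_upwards [hM_succ ▸ condExp_mul_of_stronglyMeasurable_left hg (hM_succ ▸ hMint (t + 1))
      hexp_int, condExp_exp_neg_le_of_eq_zero_or_eq_one (𝒢.le t) (hXint t) (h01 t) (hcond t)]
    with ω hpull hbound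
  calc μ[M (t + 1)|𝒢 t] ω = g ω * μ[fun ω => exp (-X t ω)|𝒢 t] ω := hpull
    _ ≤ g ω * exp (-(1 / 2 * p t ω)) := by
      gcongr
      exact (mul_pos (expLowerDeviation_pos t ω) (exp_pos _)).le
    _ = M t ω := by simp only [g, mul_assoc, ← exp_add, add_neg_cancel, exp_zero, mul_one]

end ExpLowerDeviation

end MeasureTheory

/-- Lemma F.4 of Dann et al. (2017): for a sequence of Bernoulli random variables `X t`
adapted to a filtration `F`, with `P(X t = 1 | F t) = Pt t` (`Pt t` being
`F t`-measurable and `X t` being `F (t+1)`-measurable), with probability at least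
`1 - δ`, simultaneously for all `t ≤ T`,
`∑_{k<t} X k ≥ (1/2) ∑_{k<t} Pt k - log(1/δ)`. -/
theorem adapted_bernoulli_lower_bound
    {Ω : Type*} [m : MeasurableSpace Ω] (P : Measure Ω) [IsProbabilityMeasure P]
    (F : Filtration ℕ m) (T : ℕ)
    (X : ℕ → Ω → ℝ) (Pt : ℕ → Ω → ℝ)
    (h01 : ∀ t ω, X t ω = 0 ∨ X t ω = 1)
    (hX : ∀ t, StronglyMeasurable[F (t + 1)] (X t))
    (hPt : ∀ t, StronglyMeasurable[F t] (Pt t))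
    (hcond : ∀ t, P[X t | F t] =ᵐ[P] Pt t)
    (δ : ℝ) (hδ : δ ∈ Set.Ioo (0 : ℝ) 1) :
    P {ω | ∀ t ≤ T, (1 / 2) * ∑ k ∈ Finset.range t, Pt k ω - Real.log (1 / δ)
        ≤ ∑ k ∈ Finset.range t, X k ω}
      ≥ ENNReal.ofReal (1 - δ) := by
  set G := {ω | ∀ t ≤ T, (1 / 2) * ∑ k ∈ Finset.range t, Pt k ω - Real.log (1 / δ)
    ≤ ∑ k ∈ Finset.range t, X k ω}
  set M := expLowerDeviation X Pt
  have hδ_inv : 0 < 1 / δ := one_div_pos.2 hδ.1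
  have hbad : P {ω | ∃ t ≤ T, 1 / δ ≤ M t ω} ≤ ENNReal.ofReal δ := by
    have hville := (supermartingale_expLowerDeviation (μ := P) h01 hX hPt hcond).maximal_ineq
      (fun t ω => (expLowerDeviation_pos t ω).le) hδ_inv.le T
    rwa [expLowerDeviation_zero, Pi.one_def, integral_const, probReal_univ, one_smul,
      ENNReal.ofReal_one, mul_comm, ← ENNReal.le_inv_iff_mul_le,
      ← ENNReal.ofReal_inv_of_pos hδ_inv, inv_div, div_one] at hville
  have hGc : Gᶜ ⊆ {ω | ∃ t ≤ T, 1 / δ ≤ M t ω} := fun ω hω => by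
    simp only [G, Set.mem_compl_iff, Set.mem_ofPred_eq, not_forall, not_le] at hω
    obtain ⟨t, ht, hlt⟩ := hω
    exact ⟨t, ht, ((log_lt_iff_lt_exp hδ_inv).1 (by linarith)).le⟩
  calc ENNReal.ofReal (1 - δ) = 1 - ENNReal.ofReal δ := by
        rw [ENNReal.ofReal_sub _ hδ.1.le, ENNReal.ofReal_one]
    _ ≤ 1 - P Gᶜ := tsub_le_tsub_left ((measure_mono hGc).trans hbad) 1
    _ ≤ P G := tsub_le_iff_right.2 (measure_univ (μ := P) ▸ measure_univ_le_add_compl G)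
end

section
/- Let (a_r)_{r=1}^{R} be reals and (N_r)_{r=1}^{R} positive reals with N_{r+1} ∈ {2N_r, max(N₁, N_r/2)}. Suppose: whenever N_{r+1} = 2N_r ('success'), a_r ≤ -(3/4)·N_r; whenever N_{r+1} = max(N₁, N_r/2) ('error'), a_r ≤ (3/8)·N_r. Then for every r, ∑_{r'=r}^{R} a_{r'} ≤ (3/8)·(R - r - 2)·N₁ + (3/4)·N_r. -/
/-- Deterministic skeleton of the phases-losses lemma: phase lengths `N` satisfy
`N (r+1) ∈ {2 N r, max (N 1) (N r / 2)}`; a successful phase (`N (r+1) = 2 N r`) has excess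
loss `a r ≤ -(3/4) N r`, an erroneous phase (`N (r+1) = max (N 1) (N r / 2)`) has
`a r ≤ (3/8) N r`.  Then for every `1 ≤ r ≤ R`,
`∑_{r ≤ r' < R} a r' ≤ (3/8) (R - r - 2) N 1 + (3/4) N r`. -/
theorem phases_losses (R : ℕ) (hR : 1 ≤ R) (a N : ℕ → ℝ) (hN1 : 0 < N 1)
    (hstep : ∀ r ∈ Finset.Ico 1 R,
      (N (r + 1) = 2 * N r ∨ N (r + 1) = max (N 1) (N r / 2)) ∧
      (N (r + 1) = 2 * N r → a r ≤ -(3 / 4) * N r) ∧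
      (N (r + 1) = max (N 1) (N r / 2) → a r ≤ (3 / 8) * N r)) :
    ∀ r ∈ Finset.Icc 1 R,
      ∑ r' ∈ Finset.Ico r R, a r'
        ≤ (3 / 8) * ((R : ℝ) - (r : ℝ) - 2) * N 1 + (3 / 4) * N r := by
  have hinv : ∀ r, 1 ≤ r → r ≤ R → N 1 ≤ N r := by
    intro r h1 h2
    induction r with
    | zero => omega
    | succ n ih =>
      rcases Nat.eq_or_lt_of_le h1 with h | h
      · simp [← h]
      · have hn1 : 1 ≤ n := by omega
        have hnR : n < R := by omega
        have hst := hstep n (Finset.mem_Ico.mpr ⟨hn1, hnR⟩)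
        have hNn := ih hn1 (le_of_lt hnR)
        rcases hst.1 with h2' | h2'
        · rw [h2']; nlinarith
        · rw [h2']; exact le_max_left _ _
  suffices h : ∀ d r, 1 ≤ r → r + d = R →
      ∑ r' ∈ Finset.Ico r R, a r' ≤ (3/8) * ((R:ℝ) - (r:ℝ) - 2) * N 1 + (3/4) * N r by
    intro r hr
    rw [Finset.mem_Icc] at hr
    exact h (R - r) r hr.1 (by omega)
  intro d
  induction d with
  | zero =>
    intro r h1 h2
    have hrR : r = R := by omega
    rw [hrR, Finset.Ico_self, Finset.sum_empty]
    nlinarith [hinv R hR le_rfl]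
  | succ d ih =>
    intro r h1 h2
    have hrR : r < R := by omega
    have hsum : ∑ r' ∈ Finset.Ico r R, a r' = a r + ∑ r' ∈ Finset.Ico (r+1) R, a r' :=
      Finset.sum_eq_sum_Ico_succ_bot hrR a
    have hih := ih (r + 1) (by omega) (by omega)
    push_cast at hih
    have hst := hstep r (Finset.mem_Ico.mpr ⟨h1, hrR⟩)
    have hNr1 : N 1 ≤ N r := hinv r h1 hrR.le
    rcases hst.1 with hc | hc
    · have ha := hst.2.1 hc
      rw [hc] at hih
      rw [hsum]
      nlinarith
    · have ha := hst.2.2 hc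
      rw [hc] at hih
      rw [hsum]
      rcases le_total (N 1) (N r / 2) with hm | hm
      · rw [max_eq_right hm] at hih
        nlinarith
      · rw [max_eq_left hm] at hih
        nlinarith
end
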